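/- arXiv:2510.22357 — 10 statements merged into one kernel-verified Lean document; each statement's English description precedes it below -/
import Mathlib

section
/- Let B, N > 0. For continuous φ on [0,T], let G and G* be the forward/backward solution operators as before, let H(φ) be the C¹ solution of H' + (B+N⁻¹)H - N⁻¹(B+N⁻¹)G*(H) = φ with H(0)=0, and H*(φ) the C¹ solution of -(H*)' + (B+N⁻¹)H* - N⁻¹(B+N⁻¹)G(H*) = φ with H*(T)=0. Then for all φ, ψ ∈ C([0,T]): ∫₀ᵀ H(φ)(t) ψ(t) dt = ∫₀ᵀ φ(t) H*(ψ)(t) dt. -/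
open Set intervalIntegral

/-- Fundamental theorem of calculus on `[0,T]` with derivatives within `Icc`. -/
lemma ftc_icc (T : ℝ) (hT : 0 ≤ T) (f f' : ℝ → ℝ)
    (hd : ∀ t ∈ Set.Icc (0:ℝ) T, HasDerivWithinAt f (f' t) (Set.Icc 0 T) t)
    (hc : ContinuousOn f' (Set.Icc 0 T)) :
    ∫ t in (0:ℝ)..T, f' t = f T - f 0 := by
  apply intervalIntegral.integral_eq_sub_of_hasDeriv_right_of_le hT
  · exact fun t ht => (hd t ht).continuousWithinAt
  · intro x hx
    exact ((hd x (Set.Ioo_subset_Icc_self hx)).hasDerivAt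
      (Icc_mem_nhds hx.1 hx.2)).hasDerivWithinAt
  · exact ContinuousOn.intervalIntegrable (by rwa [Set.uIcc_of_le hT])

/-- duality of the non-local operators `H` and `H*`:
`H(φ)` solves `H' + (B+N⁻¹)H - N⁻¹(B+N⁻¹)G*(H) = φ`, `H(0)=0`, where
`A = G*(H(φ))` solves `-A' + (B+N⁻¹)A = H(φ)`, `A(T)=0`; `H*(ψ)` solves
`-(H*)' + (B+N⁻¹)H* - N⁻¹(B+N⁻¹)G(H*) = ψ`, `H*(T)=0`, where `C = G(H*(ψ))`
solves `C' + (B+N⁻¹)C = H*(ψ)`, `C(0)=0`. Then `∫₀ᵀ H(φ) ψ = ∫₀ᵀ φ H*(ψ)`. -/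
theorem stmt_4 (T B N : ℝ) (hT : 0 < T) (hB : 0 < B) (hN : 0 < N)
    (φ ψ Hφ Hφ' A A' Hsψ Hsψ' C C' : ℝ → ℝ)
    (hφ : ContinuousOn φ (Set.Icc 0 T)) (hψ : ContinuousOn ψ (Set.Icc 0 T))
    (hHd : ∀ t ∈ Set.Icc (0:ℝ) T, HasDerivWithinAt Hφ (Hφ' t) (Set.Icc 0 T) t)
    (hHc : ContinuousOn Hφ' (Set.Icc 0 T))
    (hAd : ∀ t ∈ Set.Icc (0:ℝ) T, HasDerivWithinAt A (A' t) (Set.Icc 0 T) t)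
    (hAc : ContinuousOn A' (Set.Icc 0 T))
    (hAeq : ∀ t ∈ Set.Icc (0:ℝ) T, -A' t + (B + N⁻¹) * A t = Hφ t)
    (hAT : A T = 0)
    (hHeq : ∀ t ∈ Set.Icc (0:ℝ) T,
      Hφ' t + (B + N⁻¹) * Hφ t - N⁻¹ * (B + N⁻¹) * A t = φ t)
    (hH0 : Hφ 0 = 0)
    (hHsd : ∀ t ∈ Set.Icc (0:ℝ) T, HasDerivWithinAt Hsψ (Hsψ' t) (Set.Icc 0 T) t)
    (hHsc : ContinuousOn Hsψ' (Set.Icc 0 T))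
    (hCd : ∀ t ∈ Set.Icc (0:ℝ) T, HasDerivWithinAt C (C' t) (Set.Icc 0 T) t)
    (hCc : ContinuousOn C' (Set.Icc 0 T))
    (hCeq : ∀ t ∈ Set.Icc (0:ℝ) T, C' t + (B + N⁻¹) * C t = Hsψ t)
    (hC0 : C 0 = 0)
    (hHseq : ∀ t ∈ Set.Icc (0:ℝ) T,
      -Hsψ' t + (B + N⁻¹) * Hsψ t - N⁻¹ * (B + N⁻¹) * C t = ψ t)
    (hHsT : Hsψ T = 0) :
    ∫ t in (0:ℝ)..T, Hφ t * ψ t = ∫ t in (0:ℝ)..T, φ t * Hsψ t := by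
  have hT' : (0:ℝ) ≤ T := hT.le
  set κ := N⁻¹ * (B + N⁻¹) with hκ
  -- continuity of the functions themselves
  have hHcont : ContinuousOn Hφ (Set.Icc 0 T) := fun t ht => (hHd t ht).continuousWithinAt
  have hAcont : ContinuousOn A (Set.Icc 0 T) := fun t ht => (hAd t ht).continuousWithinAt
  have hHscont : ContinuousOn Hsψ (Set.Icc 0 T) := fun t ht => (hHsd t ht).continuousWithinAt
  have hCcont : ContinuousOn C (Set.Icc 0 T) := fun t ht => (hCd t ht).continuousWithinAt
  -- first IBP: ∫ (Hφ' Hsψ + Hφ Hsψ') = 0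
  have ibp1 : ∫ t in (0:ℝ)..T, (Hφ' t * Hsψ t + Hφ t * Hsψ' t) = 0 := by
    have := ftc_icc T hT' (fun t => Hφ t * Hsψ t)
      (fun t => Hφ' t * Hsψ t + Hφ t * Hsψ' t)
      (fun t ht => (hHd t ht).mul (hHsd t ht))
      ((hHc.mul hHscont).add (hHcont.mul hHsc))
    simpa [hH0, hHsT] using this
  -- second IBP: ∫ (A' C + A C') = 0
  have ibp2 : ∫ t in (0:ℝ)..T, (A' t * C t + A t * C' t) = 0 := by
    have := ftc_icc T hT' (fun t => A t * C t)
      (fun t => A' t * C t + A t * C' t)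
      (fun t ht => (hAd t ht).mul (hCd t ht))
      ((hAc.mul hCcont).add (hAcont.mul hCc))
    simpa [hC0, hAT] using this
  -- pointwise identity
  have hpt : Set.EqOn (fun t => Hφ t * ψ t - φ t * Hsψ t)
      (fun t => -(Hφ' t * Hsψ t + Hφ t * Hsψ' t) + κ * (A' t * C t + A t * C' t))
      (Set.uIcc 0 T) := by
    rw [Set.uIcc_of_le hT']
    intro t ht
    have h1 := hAeq t ht
    have h2 := hHeq t ht
    have h3 := hCeq t ht
    have h4 := hHseq t ht
    simp only
    linear_combination (-Hφ t) * h4 + Hsψ t * h2 + κ * C t * h1 - κ * A t * h3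
  -- integrability facts
  have hu : IntervalIntegrable (fun t => Hφ' t * Hsψ t + Hφ t * Hsψ' t)
      MeasureTheory.volume 0 T := by
    apply ContinuousOn.intervalIntegrable
    rw [Set.uIcc_of_le hT']
    exact (hHc.mul hHscont).add (hHcont.mul hHsc)
  have hv : IntervalIntegrable (fun t => A' t * C t + A t * C' t)
      MeasureTheory.volume 0 T := by
    apply ContinuousOn.intervalIntegrable
    rw [Set.uIcc_of_le hT']
    exact (hAc.mul hCcont).add (hAcont.mul hCc)
  have hi1 : IntervalIntegrable (fun t => Hφ t * ψ t) MeasureTheory.volume 0 T := by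
    apply ContinuousOn.intervalIntegrable
    rw [Set.uIcc_of_le hT']
    exact hHcont.mul hψ
  have hi2 : IntervalIntegrable (fun t => φ t * Hsψ t) MeasureTheory.volume 0 T := by
    apply ContinuousOn.intervalIntegrable
    rw [Set.uIcc_of_le hT']
    exact hφ.mul hHscont
  have key : (∫ t in (0:ℝ)..T, Hφ t * ψ t) - ∫ t in (0:ℝ)..T, φ t * Hsψ t = 0 := by
    have hu' : IntervalIntegrable (fun t => -(Hφ' t * Hsψ t + Hφ t * Hsψ' t))
        MeasureTheory.volume 0 T := hu.neg
    have hv' : IntervalIntegrable (fun t => κ * (A' t * C t + A t * C' t))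
        MeasureTheory.volume 0 T := hv.const_mul κ
    rw [← intervalIntegral.integral_sub hi1 hi2,
      intervalIntegral.integral_congr hpt,
      intervalIntegral.integral_add hu' hv',
      intervalIntegral.integral_neg, intervalIntegral.integral_const_mul,
      ibp1, ibp2]
    ring
  linarith [key]
end

section
/- Let B, N > 0 and φ ∈ C([0,T]). With G, G*, H, H* defined as the solution operators of the corresponding forward/backward (non-local) linear ODEs, one has G*(H(φ)) = H*(G(φ)) as functions on [0,T]. -/
/-!
Put `l = B + N⁻¹` and `μ = N⁻¹ l`. The differences `D = G*(H(φ)) - H*(G(φ))` and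
`w = H(φ) - G(φ) - μ G(H*(G(φ)))` solve the two-point problem
`w' = μ D - l w`, `D' = l D - w`, `w(0) = 0`, `D(T) = 0`.
The energy `μ D² - w²` has derivative `2 (l μ D² - 2 μ w D + l w²)`, a positive definite form
because `μ < l²`, i.e. `B > 0`. The energy is therefore nondecreasing, while it is `≥ 0` at `0`
and `≤ 0` at `T`; so it is constant, its derivative vanishes, and `D = 0`.
-/

open Set

lemma hasDerivWithinAt_Icc_eq_zero_of_nonneg {a b : ℝ} {f f' : ℝ → ℝ}
    (hf : ∀ t ∈ Icc a b, HasDerivWithinAt f (f' t) (Icc a b) t)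
    (hf'₀ : ∀ t ∈ Icc a b, 0 ≤ f' t) (hba : f b ≤ f a) :
    ∀ t ∈ Ico a b, f' t = 0 := by
  have hmono : MonotoneOn f (Icc a b) := by
    refine monotoneOn_of_hasDerivWithinAt_nonneg (convex_Icc a b)
      (fun t ht ↦ (hf t ht).continuousWithinAt) (fun t ht ↦ ?_)
      (fun t ht ↦ hf'₀ t (interior_subset ht))
    exact (hf t (interior_subset ht)).mono interior_subset
  intro t ht
  have hab : a < b := ht.1.trans_lt ht.2
  have hconst : EqOn f (fun _ ↦ f a) (Icc a b) := fun s hs ↦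
    le_antisymm ((hmono hs (right_mem_Icc.2 hab.le) hs.2).trans hba)
      (hmono (left_mem_Icc.2 hab.le) hs hs.1)
  have htIcc : t ∈ Icc a b := Ico_subset_Icc_self ht
  exact (uniqueDiffOn_Icc hab t htIcc).eq_deriv _ (hf t htIcc)
    ((hasDerivWithinAt_const t _ (f a)).congr hconst (hconst htIcc))

lemma eq_zero_of_twoPointBVP {T l μ : ℝ} (hl : 0 < l) (hμ : 0 < μ) (hμl : μ < l ^ 2)
    {w D : ℝ → ℝ}
    (hw : ∀ t ∈ Icc 0 T, HasDerivWithinAt w (μ * D t - l * w t) (Icc 0 T) t)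
    (hD : ∀ t ∈ Icc 0 T, HasDerivWithinAt D (l * D t - w t) (Icc 0 T) t)
    (hw0 : w 0 = 0) (hDT : D T = 0) :
    ∀ t ∈ Icc 0 T, D t = 0 := by
  set Q : ℝ → ℝ := fun t ↦ l * μ * D t ^ 2 - 2 * μ * w t * D t + l * w t ^ 2
  have hgap : 0 < μ * (l ^ 2 - μ) := mul_pos hμ (by linarith)
  have hcoercive (t : ℝ) : μ * (l ^ 2 - μ) * D t ^ 2 ≤ l * Q t := by
    nlinarith [sq_nonneg (l * w t - μ * D t)]
  have hQ₀ (t : ℝ) : 0 ≤ 2 * Q t := by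
    nlinarith [hcoercive t, mul_nonneg hgap.le (sq_nonneg (D t))]
  have henergy : ∀ t ∈ Icc 0 T,
      HasDerivWithinAt (fun s ↦ μ * (D s * D s) - w s * w s) (2 * Q t) (Icc 0 T) t := by
    intro t ht
    refine ((((hD t ht).mul (hD t ht)).const_mul μ).sub ((hw t ht).mul (hw t ht))).congr_deriv ?_
    ring
  have hboundary : μ * (D T * D T) - w T * w T ≤ μ * (D 0 * D 0) - w 0 * w 0 := by
    rw [hw0, hDT]
    nlinarith [mul_self_nonneg (w T), mul_self_nonneg (D 0)]
  intro t ht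
  rcases ht.2.eq_or_lt with rfl | htT
  · exact hDT
  have hQt : 2 * Q t = 0 :=
    hasDerivWithinAt_Icc_eq_zero_of_nonneg henergy (fun s _ ↦ hQ₀ s) hboundary t ⟨ht.1, htT⟩
  have hD2 : μ * (l ^ 2 - μ) * D t ^ 2 = 0 :=
    le_antisymm (by nlinarith [hcoercive t]) (mul_nonneg hgap.le (sq_nonneg (D t)))
  exact pow_eq_zero_iff two_ne_zero |>.1 ((mul_eq_zero.1 hD2).resolve_left hgap.ne')

theorem stmt_5_general (T B N : ℝ) (hB : 0 < B) (hN : 0 < N)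
    (φ Gφ Gφ' Hφ Hφ' A A' Hs Hs' C C' : ℝ → ℝ)
    -- Gφ = G(φ)
    (hGd : ∀ t ∈ Set.Icc (0:ℝ) T, HasDerivWithinAt Gφ (Gφ' t) (Set.Icc 0 T) t)
    (hGeq : ∀ t ∈ Set.Icc (0:ℝ) T, Gφ' t + (B + N⁻¹) * Gφ t = φ t)
    (hG0 : Gφ 0 = 0)
    -- Hφ = H(φ), A = G*(Hφ)
    (hHd : ∀ t ∈ Set.Icc (0:ℝ) T, HasDerivWithinAt Hφ (Hφ' t) (Set.Icc 0 T) t)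
    (hAd : ∀ t ∈ Set.Icc (0:ℝ) T, HasDerivWithinAt A (A' t) (Set.Icc 0 T) t)
    (hAeq : ∀ t ∈ Set.Icc (0:ℝ) T, -A' t + (B + N⁻¹) * A t = Hφ t)
    (hAT : A T = 0)
    (hHeq : ∀ t ∈ Set.Icc (0:ℝ) T,
      Hφ' t + (B + N⁻¹) * Hφ t - N⁻¹ * (B + N⁻¹) * A t = φ t)
    (hH0 : Hφ 0 = 0)
    -- Hs = H*(Gφ), C = G(Hs)
    (hHsd : ∀ t ∈ Set.Icc (0:ℝ) T, HasDerivWithinAt Hs (Hs' t) (Set.Icc 0 T) t)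
    (hCd : ∀ t ∈ Set.Icc (0:ℝ) T, HasDerivWithinAt C (C' t) (Set.Icc 0 T) t)
    (hCeq : ∀ t ∈ Set.Icc (0:ℝ) T, C' t + (B + N⁻¹) * C t = Hs t)
    (hC0 : C 0 = 0)
    (hHseq : ∀ t ∈ Set.Icc (0:ℝ) T,
      -Hs' t + (B + N⁻¹) * Hs t - N⁻¹ * (B + N⁻¹) * C t = Gφ t)
    (hHsT : Hs T = 0) :
    ∀ t ∈ Set.Icc (0:ℝ) T, A t = Hs t := by
  set l := B + N⁻¹
  set μ := N⁻¹ * l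
  have hNinv : 0 < N⁻¹ := inv_pos.2 hN
  have hl : 0 < l := by positivity
  have hμl : μ < l ^ 2 := by rw [sq]; exact mul_lt_mul_of_pos_right (by linarith) hl
  have hw : ∀ t ∈ Icc 0 T, HasDerivWithinAt (fun s ↦ Hφ s - Gφ s - μ * C s)
      (μ * (A t - Hs t) - l * (Hφ t - Gφ t - μ * C t)) (Icc 0 T) t := fun t ht ↦
    (((hHd t ht).sub (hGd t ht)).sub ((hCd t ht).const_mul μ)).congr_deriv
      (by linear_combination hHeq t ht - hGeq t ht - μ * hCeq t ht)
  have hD : ∀ t ∈ Icc 0 T, HasDerivWithinAt (fun s ↦ A s - Hs s)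
      (l * (A t - Hs t) - (Hφ t - Gφ t - μ * C t)) (Icc 0 T) t := fun t ht ↦
    ((hAd t ht).sub (hHsd t ht)).congr_deriv (by linear_combination hHseq t ht - hAeq t ht)
  intro t ht
  exact sub_eq_zero.1 <| eq_zero_of_twoPointBVP hl (by positivity) hμl hw hD
    (by simp [hH0, hG0, hC0]) (by simp [hAT, hHsT]) t ht

/-- `G*(H(φ)) = H*(G(φ))` on `[0,T]`. Here `Hφ = H(φ)` with
auxiliary `A = G*(H(φ))`; `Gφ = G(φ)`; and `Hs = H*(G(φ))` with auxiliary
`C = G(H*(G(φ)))`. -/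
theorem stmt_5 (T B N : ℝ) (hT : 0 < T) (hB : 0 < B) (hN : 0 < N)
    (φ Gφ Gφ' Hφ Hφ' A A' Hs Hs' C C' : ℝ → ℝ)
    (hφ : ContinuousOn φ (Set.Icc 0 T))
    -- Gφ = G(φ)
    (hGd : ∀ t ∈ Set.Icc (0:ℝ) T, HasDerivWithinAt Gφ (Gφ' t) (Set.Icc 0 T) t)
    (hGc : ContinuousOn Gφ' (Set.Icc 0 T))
    (hGeq : ∀ t ∈ Set.Icc (0:ℝ) T, Gφ' t + (B + N⁻¹) * Gφ t = φ t)
    (hG0 : Gφ 0 = 0)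
    -- Hφ = H(φ), A = G*(Hφ)
    (hHd : ∀ t ∈ Set.Icc (0:ℝ) T, HasDerivWithinAt Hφ (Hφ' t) (Set.Icc 0 T) t)
    (hHc : ContinuousOn Hφ' (Set.Icc 0 T))
    (hAd : ∀ t ∈ Set.Icc (0:ℝ) T, HasDerivWithinAt A (A' t) (Set.Icc 0 T) t)
    (hAc : ContinuousOn A' (Set.Icc 0 T))
    (hAeq : ∀ t ∈ Set.Icc (0:ℝ) T, -A' t + (B + N⁻¹) * A t = Hφ t)
    (hAT : A T = 0)
    (hHeq : ∀ t ∈ Set.Icc (0:ℝ) T,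
      Hφ' t + (B + N⁻¹) * Hφ t - N⁻¹ * (B + N⁻¹) * A t = φ t)
    (hH0 : Hφ 0 = 0)
    -- Hs = H*(Gφ), C = G(Hs)
    (hHsd : ∀ t ∈ Set.Icc (0:ℝ) T, HasDerivWithinAt Hs (Hs' t) (Set.Icc 0 T) t)
    (hHsc : ContinuousOn Hs' (Set.Icc 0 T))
    (hCd : ∀ t ∈ Set.Icc (0:ℝ) T, HasDerivWithinAt C (C' t) (Set.Icc 0 T) t)
    (hCc : ContinuousOn C' (Set.Icc 0 T))
    (hCeq : ∀ t ∈ Set.Icc (0:ℝ) T, C' t + (B + N⁻¹) * C t = Hs t)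
    (hC0 : C 0 = 0)
    (hHseq : ∀ t ∈ Set.Icc (0:ℝ) T,
      -Hs' t + (B + N⁻¹) * Hs t - N⁻¹ * (B + N⁻¹) * C t = Gφ t)
    (hHsT : Hs T = 0) :
    ∀ t ∈ Set.Icc (0:ℝ) T, A t = Hs t :=
  stmt_5_general T B N hB hN φ Gφ Gφ' Hφ Hφ' A A' Hs Hs' C C' hGd hGeq hG0 hHd hAd hAeq hAT hHeq hH0
    hHsd hCd hCeq hC0 hHseq hHsT
end

section
/- Let B, N > 0 and φ ∈ C([0,T]). With G, G*, H, H* the solution operators as defined, one has G(H*(φ)) = H(G*(φ)) as functions on [0,T]. -/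
/-!
The difference `u = G(H*(φ)) - H(G*(φ))` solves the boundary value problem
`u'' = (B + N⁻¹) B u`, `u(0) = 0`, `u'(T) + (B + N⁻¹) u(T) = 0`. The energy `u u'` has
derivative `u'² + (B + N⁻¹) B u² ≥ 0`, vanishes at `0` and equals `-(B + N⁻¹) u(T)² ≤ 0`
at `T`, so it is identically zero on `[0, T]`; hence so is its derivative, which forces `u = 0`.
-/

open Set

section EnergyEstimate

variable {a b c : ℝ} {u p : ℝ → ℝ}

theorem hasDerivWithinAt_mul_deriv {s : Set ℝ} {t : ℝ} (hu : HasDerivWithinAt u (p t) s t)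
    (hp : HasDerivWithinAt p (c * u t) s t) :
    HasDerivWithinAt (fun x => u x * p x) (p t ^ 2 + c * u t ^ 2) s t :=
  (hu.mul hp).congr_deriv (by ring)

theorem monotoneOn_mul_deriv (hc : 0 ≤ c)
    (hu : ∀ t ∈ Icc a b, HasDerivWithinAt u (p t) (Icc a b) t)
    (hp : ∀ t ∈ Icc a b, HasDerivWithinAt p (c * u t) (Icc a b) t) :
    MonotoneOn (fun x => u x * p x) (Icc a b) := by
  have hw t (ht : t ∈ Icc a b) := hasDerivWithinAt_mul_deriv (hu t ht) (hp t ht)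
  refine monotoneOn_of_hasDerivWithinAt_nonneg (convex_Icc a b)
    (f' := fun t => p t ^ 2 + c * u t ^ 2) (fun t ht => (hw t ht).continuousWithinAt)
    (fun t ht => ?_) (fun t _ => by positivity)
  exact (hw t (interior_subset ht)).mono interior_subset

theorem eqOn_zero_of_deriv_deriv_eq_pos_mul (hab : a < b) (hc : 0 < c)
    (hu : ∀ t ∈ Icc a b, HasDerivWithinAt u (p t) (Icc a b) t)
    (hp : ∀ t ∈ Icc a b, HasDerivWithinAt p (c * u t) (Icc a b) t)
    (ha : u a = 0) (hb : u b * p b ≤ 0) :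
    EqOn u 0 (Icc a b) := by
  have hmono := monotoneOn_mul_deriv hc.le hu hp
  have haI : a ∈ Icc a b := left_mem_Icc.2 hab.le
  have hbI : b ∈ Icc a b := right_mem_Icc.2 hab.le
  have henergy : ∀ x ∈ Icc a b, u x * p x = 0 := fun x hx => le_antisymm
    ((hmono hx hbI hx.2).trans hb) (by simpa [ha] using hmono haI hx hx.1)
  intro t ht
  have hzero : HasDerivWithinAt (fun x => u x * p x) 0 (Icc a b) t :=
    (hasDerivWithinAt_const t _ 0).congr henergy (henergy t ht)
  have hsum : p t ^ 2 + c * u t ^ 2 = 0 :=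
    (uniqueDiffOn_Icc hab t ht).eq_deriv _ (hasDerivWithinAt_mul_deriv (hu t ht) (hp t ht)) hzero
  have : u t ^ 2 = 0 := by nlinarith [sq_nonneg (p t), sq_nonneg (u t)]
  exact pow_eq_zero_iff two_ne_zero |>.1 this

end EnergyEstimate

theorem stmt_6_general (T B N : ℝ) (hT : 0 < T) (hB : 0 < B) (hN : 0 < N)
    (φ Hs Hs' C C' Gs Gs' HG HG' A A' : ℝ → ℝ)
    -- Hs = H*(φ), C = G(Hs)
    (hHsd : ∀ t ∈ Set.Icc (0:ℝ) T, HasDerivWithinAt Hs (Hs' t) (Set.Icc 0 T) t)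
    (hCd : ∀ t ∈ Set.Icc (0:ℝ) T, HasDerivWithinAt C (C' t) (Set.Icc 0 T) t)
    (hCeq : ∀ t ∈ Set.Icc (0:ℝ) T, C' t + (B + N⁻¹) * C t = Hs t)
    (hC0 : C 0 = 0)
    (hHseq : ∀ t ∈ Set.Icc (0:ℝ) T,
      -Hs' t + (B + N⁻¹) * Hs t - N⁻¹ * (B + N⁻¹) * C t = φ t)
    (hHsT : Hs T = 0)
    -- Gs = G*(φ)
    (hGsd : ∀ t ∈ Set.Icc (0:ℝ) T, HasDerivWithinAt Gs (Gs' t) (Set.Icc 0 T) t)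
    (hGseq : ∀ t ∈ Set.Icc (0:ℝ) T, -Gs' t + (B + N⁻¹) * Gs t = φ t)
    (hGsT : Gs T = 0)
    -- HG = H(Gs), A = G*(HG)
    (hHGd : ∀ t ∈ Set.Icc (0:ℝ) T, HasDerivWithinAt HG (HG' t) (Set.Icc 0 T) t)
    (hAd : ∀ t ∈ Set.Icc (0:ℝ) T, HasDerivWithinAt A (A' t) (Set.Icc 0 T) t)
    (hAeq : ∀ t ∈ Set.Icc (0:ℝ) T, -A' t + (B + N⁻¹) * A t = HG t)
    (hAT : A T = 0)
    (hHGeq : ∀ t ∈ Set.Icc (0:ℝ) T,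
      HG' t + (B + N⁻¹) * HG t - N⁻¹ * (B + N⁻¹) * A t = Gs t)
    (hHG0 : HG 0 = 0) :
    ∀ t ∈ Set.Icc (0:ℝ) T, C t = HG t := by
  set k := B + N⁻¹
  have hk : 0 < k := by positivity
  set u : ℝ → ℝ := fun t => C t - HG t
  set p : ℝ → ℝ := fun t => Hs t - Gs t - N⁻¹ * k * A t - k * u t
  have hu t (ht : t ∈ Icc 0 T) : HasDerivWithinAt u (p t) (Icc 0 T) t := by
    refine ((hCd t ht).sub (hHGd t ht)).congr_deriv ?_
    linear_combination hCeq t ht - hHGeq t ht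
  have hp t (ht : t ∈ Icc 0 T) : HasDerivWithinAt p (k * B * u t) (Icc 0 T) t := by
    refine ((((hHsd t ht).sub (hGsd t ht)).sub ((hAd t ht).const_mul _)).sub
      ((hu t ht).const_mul k)).congr_deriv ?_
    linear_combination hGseq t ht - hHseq t ht + N⁻¹ * k * hAeq t ht
  have hb : u T * p T ≤ 0 := by
    have : u T * p T = -(k * u T ^ 2) := by simp only [p, hHsT, hGsT, hAT]; ring
    rw [this, neg_nonpos]; positivity
  intro t ht
  exact sub_eq_zero.1 <| eqOn_zero_of_deriv_deriv_eq_pos_mul hT (by positivity) hu hp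
    (by simp [u, hC0, hHG0]) hb ht

/-- `G(H*(φ)) = H(G*(φ))` on `[0,T]`. Here `Hs = H*(φ)` with
auxiliary `C = G(H*(φ))`; `Gs = G*(φ)`; and `HG = H(G*(φ))` with auxiliary
`A = G*(H(G*(φ)))`. -/
theorem stmt_6 (T B N : ℝ) (hT : 0 < T) (hB : 0 < B) (hN : 0 < N)
    (φ Hs Hs' C C' Gs Gs' HG HG' A A' : ℝ → ℝ)
    (hφ : ContinuousOn φ (Set.Icc 0 T))
    -- Hs = H*(φ), C = G(Hs)
    (hHsd : ∀ t ∈ Set.Icc (0:ℝ) T, HasDerivWithinAt Hs (Hs' t) (Set.Icc 0 T) t)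
    (hHsc : ContinuousOn Hs' (Set.Icc 0 T))
    (hCd : ∀ t ∈ Set.Icc (0:ℝ) T, HasDerivWithinAt C (C' t) (Set.Icc 0 T) t)
    (hCc : ContinuousOn C' (Set.Icc 0 T))
    (hCeq : ∀ t ∈ Set.Icc (0:ℝ) T, C' t + (B + N⁻¹) * C t = Hs t)
    (hC0 : C 0 = 0)
    (hHseq : ∀ t ∈ Set.Icc (0:ℝ) T,
      -Hs' t + (B + N⁻¹) * Hs t - N⁻¹ * (B + N⁻¹) * C t = φ t)
    (hHsT : Hs T = 0)
    -- Gs = G*(φ)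
    (hGsd : ∀ t ∈ Set.Icc (0:ℝ) T, HasDerivWithinAt Gs (Gs' t) (Set.Icc 0 T) t)
    (hGsc : ContinuousOn Gs' (Set.Icc 0 T))
    (hGseq : ∀ t ∈ Set.Icc (0:ℝ) T, -Gs' t + (B + N⁻¹) * Gs t = φ t)
    (hGsT : Gs T = 0)
    -- HG = H(Gs), A = G*(HG)
    (hHGd : ∀ t ∈ Set.Icc (0:ℝ) T, HasDerivWithinAt HG (HG' t) (Set.Icc 0 T) t)
    (hHGc : ContinuousOn HG' (Set.Icc 0 T))
    (hAd : ∀ t ∈ Set.Icc (0:ℝ) T, HasDerivWithinAt A (A' t) (Set.Icc 0 T) t)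
    (hAc : ContinuousOn A' (Set.Icc 0 T))
    (hAeq : ∀ t ∈ Set.Icc (0:ℝ) T, -A' t + (B + N⁻¹) * A t = HG t)
    (hAT : A T = 0)
    (hHGeq : ∀ t ∈ Set.Icc (0:ℝ) T,
      HG' t + (B + N⁻¹) * HG t - N⁻¹ * (B + N⁻¹) * A t = Gs t)
    (hHG0 : HG 0 = 0) :
    ∀ t ∈ Set.Icc (0:ℝ) T, C t = HG t :=
  stmt_6_general T B N hT hB hN φ Hs Hs' C C' Gs Gs' HG HG' A A' hHsd hCd hCeq hC0 hHseq hHsT hGsd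
    hGseq hGsT hHGd hAd hAeq hAT hHGeq hHG0
end

section
/- Let B, N > 0 and φ ∈ C([0,T]). With G, G*, H, H* the solution operators as defined, one has H(φ) = G(φ) + N⁻¹(B + N⁻¹) · G(H*(G(φ))) on [0,T]. -/
/-!
Put `α = B + N⁻¹`, `k = N⁻¹ α`, `D = H(φ) - G(φ) - k G(H*(G(φ)))` and
`E = G*(H(φ)) - H*(G(φ))`. The defining equations turn into the linear system
`D' = k E - α D`, `E' = α E - D` with `D(0) = 0` and `E(T) = 0`. The energy `D² - k E²` is
nonincreasing, since `α` times its derivative is `-2 (α D - k E)² - 2 k (α² - k) E²` and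
`k < α²` (this is `B > 0`). It is `≤ 0` at `0` and `≥ 0` at `T`, hence identically zero, and
then so is its derivative; by definiteness `D = E = 0`.
-/

open Set

lemma coupled_energy_deriv_mul (α k d e : ℝ) :
    α * (2 * d * (k * e - α * d) - k * (2 * e * (α * e - d))) =
      -2 * (α * d - k * e) ^ 2 - 2 * k * (α ^ 2 - k) * e ^ 2 := by
  ring

section CoupledEnergy

variable {α k : ℝ}

lemma coupled_energy_deriv_nonpos (hα : 0 < α) (hk : 0 ≤ k) (hkα : k ≤ α ^ 2) (d e : ℝ) :
    2 * d * (k * e - α * d) - k * (2 * e * (α * e - d)) ≤ 0 := by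
  refine nonpos_of_mul_nonpos_right ?_ hα
  rw [coupled_energy_deriv_mul]
  nlinarith [sq_nonneg (α * d - k * e),
    mul_nonneg (mul_nonneg hk (sub_nonneg.2 hkα)) (sq_nonneg e)]

lemma eq_zero_of_coupled_energy_deriv_eq_zero (hα : 0 < α) (hk : 0 < k) (hkα : k < α ^ 2)
    {d e : ℝ}
    (h : 2 * d * (k * e - α * d) - k * (2 * e * (α * e - d)) = 0) : d = 0 ∧ e = 0 := by
  have hquad := coupled_energy_deriv_mul α k d e
  rw [h, mul_zero] at hquad
  have hkα' : 0 < k * (α ^ 2 - k) := mul_pos hk (sub_pos.2 hkα)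
  have hsq₁ := sq_nonneg (α * d - k * e)
  have hsq₂ := mul_nonneg hkα'.le (sq_nonneg e)
  have he : e = 0 := by
    have : k * (α ^ 2 - k) * e ^ 2 = 0 := by linarith
    exact pow_eq_zero_iff two_ne_zero |>.1 <| (mul_eq_zero.1 this).resolve_left hkα'.ne'
  have hd : (α * d - k * e) ^ 2 = 0 := by linarith
  rw [he, mul_zero, sub_zero, pow_eq_zero_iff two_ne_zero] at hd
  exact ⟨(mul_eq_zero.1 hd).resolve_left hα.ne', he⟩

theorem coupled_system_eq_zero (hα : 0 < α) (hk : 0 < k) (hkα : k < α ^ 2)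
    {a b : ℝ} {D E : ℝ → ℝ}
    (hD : ∀ t ∈ Icc a b, HasDerivWithinAt D (k * E t - α * D t) (Icc a b) t)
    (hE : ∀ t ∈ Icc a b, HasDerivWithinAt E (α * E t - D t) (Icc a b) t)
    (hDa : D a = 0) (hEb : E b = 0) :
    ∀ t ∈ Icc a b, D t = 0 ∧ E t = 0 := by
  intro t ht
  rcases le_or_gt b a with hba | hab
  · obtain rfl : a = t := le_antisymm ht.1 (ht.2.trans hba)
    obtain rfl : a = b := le_antisymm ht.2 hba
    exact ⟨hDa, hEb⟩
  set F : ℝ → ℝ := fun s => D s ^ 2 - k * E s ^ 2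
  set F' : ℝ → ℝ := fun s =>
    2 * D s * (k * E s - α * D s) - k * (2 * E s * (α * E s - D s))
  have hF : ∀ s ∈ Icc a b, HasDerivWithinAt F (F' s) (Icc a b) s := fun s hs =>
    (((hD s hs).fun_pow 2).fun_sub (((hE s hs).fun_pow 2).const_mul k)).congr_deriv (by
      push_cast; ring)
  have hF_anti : AntitoneOn F (Icc a b) :=
    antitoneOn_of_hasDerivWithinAt_nonpos (convex_Icc a b)
      (fun s hs => (hF s hs).continuousWithinAt)
      (fun s hs => (hF s (interior_subset hs)).mono interior_subset)
      (fun s _ => coupled_energy_deriv_nonpos hα hk.le hkα.le (D s) (E s))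
  have hF_zero : ∀ s ∈ Icc a b, F s = 0 := fun s hs => by
    have hFa : F a ≤ 0 := by simp only [F, hDa]; nlinarith [sq_nonneg (E a)]
    have hFb : 0 ≤ F b := by simp only [F, hEb]; nlinarith [sq_nonneg (D b)]
    have := hF_anti (left_mem_Icc.2 hab.le) hs hs.1
    have := hF_anti hs (right_mem_Icc.2 hab.le) hs.2
    linarith
  have hF't : F' t = 0 :=
    (uniqueDiffOn_Icc hab t ht).eq_deriv _ (hF t ht)
      ((hasDerivWithinAt_const t _ 0).congr hF_zero (hF_zero t ht))
  exact eq_zero_of_coupled_energy_deriv_eq_zero hα hk hkα hF't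

end CoupledEnergy

theorem stmt_7_general (T B N : ℝ) (hB : 0 < B) (hN : 0 < N)
    (φ Hφ Hφ' A A' Gφ Gφ' Hs Hs' C C' : ℝ → ℝ)
    -- Hφ = H(φ), A = G*(Hφ)
    (hHd : ∀ t ∈ Set.Icc (0:ℝ) T, HasDerivWithinAt Hφ (Hφ' t) (Set.Icc 0 T) t)
    (hAd : ∀ t ∈ Set.Icc (0:ℝ) T, HasDerivWithinAt A (A' t) (Set.Icc 0 T) t)
    (hAeq : ∀ t ∈ Set.Icc (0:ℝ) T, -A' t + (B + N⁻¹) * A t = Hφ t)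
    (hAT : A T = 0)
    (hHeq : ∀ t ∈ Set.Icc (0:ℝ) T,
      Hφ' t + (B + N⁻¹) * Hφ t - N⁻¹ * (B + N⁻¹) * A t = φ t)
    (hH0 : Hφ 0 = 0)
    -- Gφ = G(φ)
    (hGd : ∀ t ∈ Set.Icc (0:ℝ) T, HasDerivWithinAt Gφ (Gφ' t) (Set.Icc 0 T) t)
    (hGeq : ∀ t ∈ Set.Icc (0:ℝ) T, Gφ' t + (B + N⁻¹) * Gφ t = φ t)
    (hG0 : Gφ 0 = 0)
    -- Hs = H*(Gφ), C = G(Hs) = G(H*(G(φ)))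
    (hHsd : ∀ t ∈ Set.Icc (0:ℝ) T, HasDerivWithinAt Hs (Hs' t) (Set.Icc 0 T) t)
    (hCd : ∀ t ∈ Set.Icc (0:ℝ) T, HasDerivWithinAt C (C' t) (Set.Icc 0 T) t)
    (hCeq : ∀ t ∈ Set.Icc (0:ℝ) T, C' t + (B + N⁻¹) * C t = Hs t)
    (hC0 : C 0 = 0)
    (hHseq : ∀ t ∈ Set.Icc (0:ℝ) T,
      -Hs' t + (B + N⁻¹) * Hs t - N⁻¹ * (B + N⁻¹) * C t = Gφ t)
    (hHsT : Hs T = 0) :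
    ∀ t ∈ Set.Icc (0:ℝ) T, Hφ t = Gφ t + N⁻¹ * (B + N⁻¹) * C t := by
  set α := B + N⁻¹
  set k := N⁻¹ * α
  have hNinv : 0 < N⁻¹ := inv_pos.2 hN
  have hα : 0 < α := by positivity
  have hkα : k < α ^ 2 := by rw [sq]; exact mul_lt_mul_of_pos_right (by linarith) hα
  have hDE := coupled_system_eq_zero (D := fun s => Hφ s - Gφ s - k * C s)
    (E := fun s => A s - Hs s) hα (by positivity) hkα
    (fun s hs => (((hHd s hs).sub (hGd s hs)).sub ((hCd s hs).const_mul k)).congr_deriv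
      (by linear_combination hHeq s hs - hGeq s hs - k * hCeq s hs))
    (fun s hs => ((hAd s hs).sub (hHsd s hs)).congr_deriv
      (by linear_combination hHseq s hs - hAeq s hs))
    (by simp [hH0, hG0, hC0]) (by simp [hAT, hHsT])
  intro t ht
  linarith [(hDE t ht).1]

/-- `H(φ) = G(φ) + N⁻¹(B+N⁻¹)·G(H*(G(φ)))` on `[0,T]`.
Here `Hφ = H(φ)` with auxiliary `A = G*(H(φ))`; `Gφ = G(φ)`; `Hs = H*(G(φ))`
with auxiliary `C = G(H*(G(φ)))`. -/
theorem stmt_7 (T B N : ℝ) (hT : 0 < T) (hB : 0 < B) (hN : 0 < N)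
    (φ Hφ Hφ' A A' Gφ Gφ' Hs Hs' C C' : ℝ → ℝ)
    (hφ : ContinuousOn φ (Set.Icc 0 T))
    -- Hφ = H(φ), A = G*(Hφ)
    (hHd : ∀ t ∈ Set.Icc (0:ℝ) T, HasDerivWithinAt Hφ (Hφ' t) (Set.Icc 0 T) t)
    (hHc : ContinuousOn Hφ' (Set.Icc 0 T))
    (hAd : ∀ t ∈ Set.Icc (0:ℝ) T, HasDerivWithinAt A (A' t) (Set.Icc 0 T) t)
    (hAc : ContinuousOn A' (Set.Icc 0 T))
    (hAeq : ∀ t ∈ Set.Icc (0:ℝ) T, -A' t + (B + N⁻¹) * A t = Hφ t)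
    (hAT : A T = 0)
    (hHeq : ∀ t ∈ Set.Icc (0:ℝ) T,
      Hφ' t + (B + N⁻¹) * Hφ t - N⁻¹ * (B + N⁻¹) * A t = φ t)
    (hH0 : Hφ 0 = 0)
    -- Gφ = G(φ)
    (hGd : ∀ t ∈ Set.Icc (0:ℝ) T, HasDerivWithinAt Gφ (Gφ' t) (Set.Icc 0 T) t)
    (hGc : ContinuousOn Gφ' (Set.Icc 0 T))
    (hGeq : ∀ t ∈ Set.Icc (0:ℝ) T, Gφ' t + (B + N⁻¹) * Gφ t = φ t)
    (hG0 : Gφ 0 = 0)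
    -- Hs = H*(Gφ), C = G(Hs) = G(H*(G(φ)))
    (hHsd : ∀ t ∈ Set.Icc (0:ℝ) T, HasDerivWithinAt Hs (Hs' t) (Set.Icc 0 T) t)
    (hHsc : ContinuousOn Hs' (Set.Icc 0 T))
    (hCd : ∀ t ∈ Set.Icc (0:ℝ) T, HasDerivWithinAt C (C' t) (Set.Icc 0 T) t)
    (hCc : ContinuousOn C' (Set.Icc 0 T))
    (hCeq : ∀ t ∈ Set.Icc (0:ℝ) T, C' t + (B + N⁻¹) * C t = Hs t)
    (hC0 : C 0 = 0)
    (hHseq : ∀ t ∈ Set.Icc (0:ℝ) T,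
      -Hs' t + (B + N⁻¹) * Hs t - N⁻¹ * (B + N⁻¹) * C t = Gφ t)
    (hHsT : Hs T = 0) :
    ∀ t ∈ Set.Icc (0:ℝ) T, Hφ t = Gφ t + N⁻¹ * (B + N⁻¹) * C t :=
  stmt_7_general T B N hB hN φ Hφ Hφ' A A' Gφ Gφ' Hs Hs' C C' hHd hAd hAeq hAT hHeq hH0 hGd hGeq hG0
    hHsd hCd hCeq hC0 hHseq hHsT
end

section
/- Let B, N > 0 and φ ∈ C([0,T]). With G, G*, H, H* the solution operators as defined, one has H*(φ) = G*(φ) + N⁻¹(B + N⁻¹) · G*(H(G*(φ))) on [0,T]. -/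
/-!
Put `k = B + N⁻¹` and `c = N⁻¹ k`. The differences `u = H*(φ) - G*(φ) - c G*(H(G*(φ)))` and
`v = G(H*(φ)) - H(G*(φ))` solve the homogeneous system `u' = k u - c v`, `v' = u - k v` with
`v(0) = 0` and `u(T) = 0`. Along it the energy `u² - c v²` has derivative
`2 (k u² - 2 c u v + c k v²)`, a positive definite form because `k² - c = k B > 0`. So the energy
is nondecreasing, yet `≥ 0` at `0` and `≤ 0` at `T`; it vanishes identically, hence so does its
derivative, and therefore `u`.
-/

open Set

theorem quadratic_form_nonneg {k c : ℝ} (hk : 0 < k) (hc : 0 < c) (hck : c < k ^ 2) (x y : ℝ) :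
    0 ≤ k * x ^ 2 - 2 * c * x * y + c * k * y ^ 2 := by
  have hd : 0 ≤ c * (k ^ 2 - c) * y ^ 2 := by
    have := sub_pos.mpr hck
    positivity
  have hsq : k * (k * x ^ 2 - 2 * c * x * y + c * k * y ^ 2)
      = (k * x - c * y) ^ 2 + c * (k ^ 2 - c) * y ^ 2 := by ring
  exact nonneg_of_mul_nonneg_right (hsq ▸ add_nonneg (sq_nonneg _) hd) hk

theorem eq_zero_of_quadratic_form_eq_zero {k c x y : ℝ} (hk : 0 < k) (hc : 0 < c)
    (hck : c < k ^ 2) (h : k * x ^ 2 - 2 * c * x * y + c * k * y ^ 2 = 0) : x = 0 := by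
  have hd : 0 < c * (k ^ 2 - c) := mul_pos hc (sub_pos.mpr hck)
  have hsq : (k * x - c * y) ^ 2 + c * (k ^ 2 - c) * y ^ 2 = 0 := by linear_combination k * h
  obtain ⟨hx, hy⟩ :=
    (add_eq_zero_iff_of_nonneg (sq_nonneg _) (mul_nonneg hd.le (sq_nonneg y))).mp hsq
  obtain rfl : y = 0 := pow_eq_zero_iff two_ne_zero |>.mp ((mul_eq_zero.mp hy).resolve_left hd.ne')
  simpa [hk.ne'] using hx

theorem energy_hasDerivWithinAt {k c x : ℝ} {s : Set ℝ} {u v : ℝ → ℝ}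
    (hu : HasDerivWithinAt u (k * u x - c * v x) s x)
    (hv : HasDerivWithinAt v (u x - k * v x) s x) :
    HasDerivWithinAt (fun t => u t ^ 2 - c * v t ^ 2)
      (2 * (k * u x ^ 2 - 2 * c * u x * v x + c * k * v x ^ 2)) s x :=
  ((hu.pow 2).sub ((hv.pow 2).const_mul c)).congr_deriv (by norm_num; ring)

theorem eqOn_zero_of_hasDerivWithinAt_nonneg {a b : ℝ} {F F' : ℝ → ℝ}
    (hF : ∀ t ∈ Icc a b, HasDerivWithinAt F (F' t) (Icc a b) t)
    (hF' : ∀ t ∈ Icc a b, 0 ≤ F' t) (ha : 0 ≤ F a) (hb : F b ≤ 0) :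
    ∀ t ∈ Icc a b, F t = 0 := by
  have hmono : MonotoneOn F (Icc a b) :=
    monotoneOn_of_hasDerivWithinAt_nonneg (convex_Icc a b)
      (fun t ht => (hF t ht).continuousWithinAt)
      (fun t ht => (hF t (interior_subset ht)).mono interior_subset)
      (fun t ht => hF' t (interior_subset ht))
  intro t ht
  have hab : a ≤ b := ht.1.trans ht.2
  have h₁ : F a ≤ F t := hmono (left_mem_Icc.mpr hab) ht ht.1
  have h₂ : F t ≤ F b := hmono ht (right_mem_Icc.mpr hab) ht.2
  linarith

theorem eqOn_zero_of_hasDerivWithinAt_linear_system {a b k c : ℝ} {u v : ℝ → ℝ} (hab : a < b)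
    (hk : 0 < k) (hc : 0 < c) (hck : c < k ^ 2)
    (hu : ∀ t ∈ Icc a b, HasDerivWithinAt u (k * u t - c * v t) (Icc a b) t)
    (hv : ∀ t ∈ Icc a b, HasDerivWithinAt v (u t - k * v t) (Icc a b) t)
    (hva : v a = 0) (hub : u b = 0) :
    ∀ t ∈ Icc a b, u t = 0 := by
  have hE : ∀ t ∈ Icc a b, HasDerivWithinAt (fun t => u t ^ 2 - c * v t ^ 2)
      (2 * (k * u t ^ 2 - 2 * c * u t * v t + c * k * v t ^ 2)) (Icc a b) t :=
    fun t ht => energy_hasDerivWithinAt (hu t ht) (hv t ht)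
  have hE₀ : ∀ t ∈ Icc a b, u t ^ 2 - c * v t ^ 2 = 0 :=
    eqOn_zero_of_hasDerivWithinAt_nonneg hE
      (fun t _ => mul_nonneg zero_le_two (quadratic_form_nonneg hk hc hck _ _))
      (by simp [hva, sq_nonneg]) (by simp [hub]; positivity)
  intro t ht
  have hE' : HasDerivWithinAt (fun t => u t ^ 2 - c * v t ^ 2) 0 (Icc a b) t :=
    (hasDerivWithinAt_const t _ 0).congr hE₀ (hE₀ t ht)
  have hQ := (uniqueDiffOn_Icc hab t ht).eq_deriv _ (hE t ht) hE'
  exact eq_zero_of_quadratic_form_eq_zero hk hc hck (by linarith)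

theorem stmt_8_general (T B N : ℝ) (hT : 0 < T) (hB : 0 < B) (hN : 0 < N)
    (φ Hs Hs' C C' Gs Gs' HG HG' A A' : ℝ → ℝ)
    -- Hs = H*(φ), C = G(Hs)
    (hHsd : ∀ t ∈ Set.Icc (0:ℝ) T, HasDerivWithinAt Hs (Hs' t) (Set.Icc 0 T) t)
    (hCd : ∀ t ∈ Set.Icc (0:ℝ) T, HasDerivWithinAt C (C' t) (Set.Icc 0 T) t)
    (hCeq : ∀ t ∈ Set.Icc (0:ℝ) T, C' t + (B + N⁻¹) * C t = Hs t)
    (hC0 : C 0 = 0)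
    (hHseq : ∀ t ∈ Set.Icc (0:ℝ) T,
      -Hs' t + (B + N⁻¹) * Hs t - N⁻¹ * (B + N⁻¹) * C t = φ t)
    (hHsT : Hs T = 0)
    -- Gs = G*(φ)
    (hGsd : ∀ t ∈ Set.Icc (0:ℝ) T, HasDerivWithinAt Gs (Gs' t) (Set.Icc 0 T) t)
    (hGseq : ∀ t ∈ Set.Icc (0:ℝ) T, -Gs' t + (B + N⁻¹) * Gs t = φ t)
    (hGsT : Gs T = 0)
    -- HG = H(Gs), A = G*(HG) = G*(H(G*(φ)))
    (hHGd : ∀ t ∈ Set.Icc (0:ℝ) T, HasDerivWithinAt HG (HG' t) (Set.Icc 0 T) t)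
    (hAd : ∀ t ∈ Set.Icc (0:ℝ) T, HasDerivWithinAt A (A' t) (Set.Icc 0 T) t)
    (hAeq : ∀ t ∈ Set.Icc (0:ℝ) T, -A' t + (B + N⁻¹) * A t = HG t)
    (hAT : A T = 0)
    (hHGeq : ∀ t ∈ Set.Icc (0:ℝ) T,
      HG' t + (B + N⁻¹) * HG t - N⁻¹ * (B + N⁻¹) * A t = Gs t)
    (hHG0 : HG 0 = 0) :
    ∀ t ∈ Set.Icc (0:ℝ) T, Hs t = Gs t + N⁻¹ * (B + N⁻¹) * A t := by
  set k := B + N⁻¹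
  set c := N⁻¹ * k
  have hk : 0 < k := by positivity
  have hck : c < k ^ 2 := by nlinarith [mul_pos hk hB]
  have hu : ∀ t ∈ Icc 0 T, HasDerivWithinAt (fun t => Hs t - Gs t - c * A t)
      (k * (Hs t - Gs t - c * A t) - c * (C t - HG t)) (Icc 0 T) t := fun t ht =>
    (((hHsd t ht).sub (hGsd t ht)).sub ((hAd t ht).const_mul c)).congr_deriv
      (by linear_combination hGseq t ht - hHseq t ht + c * hAeq t ht)
  have hv : ∀ t ∈ Icc 0 T, HasDerivWithinAt (fun t => C t - HG t)
      ((Hs t - Gs t - c * A t) - k * (C t - HG t)) (Icc 0 T) t := fun t ht =>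
    ((hCd t ht).sub (hHGd t ht)).congr_deriv (by linear_combination hCeq t ht - hHGeq t ht)
  intro t ht
  have hu₀ := eqOn_zero_of_hasDerivWithinAt_linear_system hT hk (by positivity) hck hu hv
    (by simp [hC0, hHG0]) (by simp [hHsT, hGsT, hAT]) t ht
  linarith

/-- `H*(φ) = G*(φ) + N⁻¹(B+N⁻¹)·G*(H(G*(φ)))` on `[0,T]`.
Here `Hs = H*(φ)` with auxiliary `C = G(H*(φ))`; `Gs = G*(φ)`; `HG = H(G*(φ))`
with auxiliary `A = G*(H(G*(φ)))`. -/
theorem stmt_8 (T B N : ℝ) (hT : 0 < T) (hB : 0 < B) (hN : 0 < N)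
    (φ Hs Hs' C C' Gs Gs' HG HG' A A' : ℝ → ℝ)
    (hφ : ContinuousOn φ (Set.Icc 0 T))
    -- Hs = H*(φ), C = G(Hs)
    (hHsd : ∀ t ∈ Set.Icc (0:ℝ) T, HasDerivWithinAt Hs (Hs' t) (Set.Icc 0 T) t)
    (hHsc : ContinuousOn Hs' (Set.Icc 0 T))
    (hCd : ∀ t ∈ Set.Icc (0:ℝ) T, HasDerivWithinAt C (C' t) (Set.Icc 0 T) t)
    (hCc : ContinuousOn C' (Set.Icc 0 T))
    (hCeq : ∀ t ∈ Set.Icc (0:ℝ) T, C' t + (B + N⁻¹) * C t = Hs t)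
    (hC0 : C 0 = 0)
    (hHseq : ∀ t ∈ Set.Icc (0:ℝ) T,
      -Hs' t + (B + N⁻¹) * Hs t - N⁻¹ * (B + N⁻¹) * C t = φ t)
    (hHsT : Hs T = 0)
    -- Gs = G*(φ)
    (hGsd : ∀ t ∈ Set.Icc (0:ℝ) T, HasDerivWithinAt Gs (Gs' t) (Set.Icc 0 T) t)
    (hGsc : ContinuousOn Gs' (Set.Icc 0 T))
    (hGseq : ∀ t ∈ Set.Icc (0:ℝ) T, -Gs' t + (B + N⁻¹) * Gs t = φ t)
    (hGsT : Gs T = 0)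
    -- HG = H(Gs), A = G*(HG) = G*(H(G*(φ)))
    (hHGd : ∀ t ∈ Set.Icc (0:ℝ) T, HasDerivWithinAt HG (HG' t) (Set.Icc 0 T) t)
    (hHGc : ContinuousOn HG' (Set.Icc 0 T))
    (hAd : ∀ t ∈ Set.Icc (0:ℝ) T, HasDerivWithinAt A (A' t) (Set.Icc 0 T) t)
    (hAc : ContinuousOn A' (Set.Icc 0 T))
    (hAeq : ∀ t ∈ Set.Icc (0:ℝ) T, -A' t + (B + N⁻¹) * A t = HG t)
    (hAT : A T = 0)
    (hHGeq : ∀ t ∈ Set.Icc (0:ℝ) T,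
      HG' t + (B + N⁻¹) * HG t - N⁻¹ * (B + N⁻¹) * A t = Gs t)
    (hHG0 : HG 0 = 0) :
    ∀ t ∈ Set.Icc (0:ℝ) T, Hs t = Gs t + N⁻¹ * (B + N⁻¹) * A t :=
  stmt_8_general T B N hT hB hN φ Hs Hs' C C' Gs Gs' HG HG' A A' hHsd hCd hCeq hC0 hHseq hHsT hGsd
    hGseq hGsT hHGd hAd hAeq hAT hHGeq hHG0
end

section
/- Let B, N > 0 and φ ∈ C([0,T]). Define A = G*(H(φ)) where H and G* are the solution operators as defined. Then A is twice continuously differentiable and satisfies the boundary value problem -A''(t) + B(B + N⁻¹)A(t) = φ(t) on [0,T], with A(T) = 0 and -A'(0) + (B + N⁻¹)A(0) = 0. -/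
/-- `A = G*(H(φ))` is C² and satisfies
`-A'' + B(B+N⁻¹)A = φ` on `[0,T]`, with `A(T) = 0` and
`-A'(0) + (B+N⁻¹)A(0) = 0`. -/
theorem stmt_9 (T B N : ℝ) (hT : 0 < T) (hB : 0 < B) (hN : 0 < N)
    (φ Hφ Hφ' A A' : ℝ → ℝ)
    (hφ : ContinuousOn φ (Set.Icc 0 T))
    (hHd : ∀ t ∈ Set.Icc (0:ℝ) T, HasDerivWithinAt Hφ (Hφ' t) (Set.Icc 0 T) t)
    (hHc : ContinuousOn Hφ' (Set.Icc 0 T))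
    (hAd : ∀ t ∈ Set.Icc (0:ℝ) T, HasDerivWithinAt A (A' t) (Set.Icc 0 T) t)
    (hAc : ContinuousOn A' (Set.Icc 0 T))
    (hAeq : ∀ t ∈ Set.Icc (0:ℝ) T, -A' t + (B + N⁻¹) * A t = Hφ t)
    (hAT : A T = 0)
    (hHeq : ∀ t ∈ Set.Icc (0:ℝ) T,
      Hφ' t + (B + N⁻¹) * Hφ t - N⁻¹ * (B + N⁻¹) * A t = φ t)
    (hH0 : Hφ 0 = 0) :
    (∃ A'' : ℝ → ℝ, ContinuousOn A'' (Set.Icc 0 T) ∧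
      (∀ t ∈ Set.Icc (0:ℝ) T, HasDerivWithinAt A' (A'' t) (Set.Icc 0 T) t) ∧
      (∀ t ∈ Set.Icc (0:ℝ) T, -A'' t + B * (B + N⁻¹) * A t = φ t))
    ∧ A T = 0 ∧ -A' 0 + (B + N⁻¹) * A 0 = 0 := by
  have h0T : (0:ℝ) ∈ Set.Icc (0:ℝ) T := ⟨le_refl _, hT.le⟩
  refine ⟨⟨fun t => (B + N⁻¹) * A' t - Hφ' t, ?_, ?_, ?_⟩, hAT, ?_⟩
  · exact (continuousOn_const.mul hAc).sub hHc
  · intro t ht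
    have hg : HasDerivWithinAt (fun s => (B + N⁻¹) * A s - Hφ s)
        ((B + N⁻¹) * A' t - Hφ' t) (Set.Icc 0 T) t :=
      ((hAd t ht).const_mul _).sub (hHd t ht)
    refine hg.congr (fun s hs => ?_) ?_
    · have := hAeq s hs; linarith
    · have := hAeq t ht; linarith
  · intro t ht
    have h1 := hAeq t ht
    have h2 := hHeq t ht
    have hNinv : (0:ℝ) < N⁻¹ := inv_pos.mpr hN
    nlinarith [h1, h2]
  · have := hAeq 0 h0T
    rw [hH0] at this
    linarith
end

section
/- Let B > 0 and u ∈ C([0,T]). Let M solve M' + BM = u, M(0)=0, and let M* solve -(M*)' + B M* = the function M, with M*(T)=0 (i.e. M* = M*(M(u))). Then ∫₀ᵀ (u(t) - B² M*(t)) u(t) dt = ∫₀ᵀ (u(t) - B·M(t))² dt + B·M(T)². -/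
/-!
By the two differential equations, `(u - B² M*) u - (u - B M)²` is the derivative of
`B M² - B² M* M`; integrating over `[0, T]` and using `M(0) = 0`, `M*(T) = 0` leaves `B M(T)²`.
-/

open Set MeasureTheory intervalIntegral

theorem integral_eq_sub_of_hasDerivWithinAt_Icc {E : Type*} [NormedAddCommGroup E]
    [NormedSpace ℝ E] [CompleteSpace E] {f f' : ℝ → E} {a b : ℝ} (hab : a ≤ b)
    (hderiv : ∀ t ∈ Icc a b, HasDerivWithinAt f (f' t) (Icc a b) t)
    (hint : IntervalIntegrable f' volume a b) :
    ∫ t in a..b, f' t = f b - f a :=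
  integral_eq_sub_of_hasDerivAt_of_le hab
    (fun t ht => (hderiv t ht).continuousWithinAt)
    (fun t ht => (hderiv t (Ioo_subset_Icc_self ht)).hasDerivAt (Icc_mem_nhds ht.1 ht.2)) hint

theorem stmt_12_general (T B : ℝ) (hT : 0 < T)
    (u M M' Ms Ms' : ℝ → ℝ)
    (hu : ContinuousOn u (Set.Icc 0 T))
    (hMd : ∀ t ∈ Set.Icc (0:ℝ) T, HasDerivWithinAt M (M' t) (Set.Icc 0 T) t)
    (hMeq : ∀ t ∈ Set.Icc (0:ℝ) T, M' t + B * M t = u t)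
    (hM0 : M 0 = 0)
    (hMsd : ∀ t ∈ Set.Icc (0:ℝ) T, HasDerivWithinAt Ms (Ms' t) (Set.Icc 0 T) t)
    (hMseq : ∀ t ∈ Set.Icc (0:ℝ) T, -Ms' t + B * Ms t = M t)
    (hMsT : Ms T = 0) :
    ∫ t in (0:ℝ)..T, (u t - B ^ 2 * Ms t) * u t
      = (∫ t in (0:ℝ)..T, (u t - B * M t) ^ 2) + B * M T ^ 2 := by
  have hMcont : ContinuousOn M (Icc 0 T) := fun t ht => (hMd t ht).continuousWithinAt
  have hMscont : ContinuousOn Ms (Icc 0 T) := fun t ht => (hMsd t ht).continuousWithinAt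
  have hint_lhs : IntervalIntegrable (fun t => (u t - B ^ 2 * Ms t) * u t) volume 0 T :=
    ((hu.sub (hMscont.const_smul (B ^ 2))).mul hu).intervalIntegrable_of_Icc hT.le
  have hint_sq : IntervalIntegrable (fun t => (u t - B * M t) ^ 2) volume 0 T :=
    ((hu.sub (hMcont.const_smul B)).pow 2).intervalIntegrable_of_Icc hT.le
  have hderiv : ∀ t ∈ Icc 0 T, HasDerivWithinAt (fun t => B * M t ^ 2 - B ^ 2 * (Ms t * M t))
      ((u t - B ^ 2 * Ms t) * u t - (u t - B * M t) ^ 2) (Icc 0 T) t := by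
    intro t ht
    refine ((((hMd t ht).fun_pow 2).const_mul B).sub
      (((hMsd t ht).mul (hMd t ht)).const_mul (B ^ 2))).congr_deriv ?_
    linear_combination (2 * B * M t - B ^ 2 * Ms t) * hMeq t ht + B ^ 2 * M t * hMseq t ht
  have hftc := integral_eq_sub_of_hasDerivWithinAt_Icc hT.le hderiv (hint_lhs.sub hint_sq)
  rw [integral_sub hint_lhs hint_sq, hM0, hMsT] at hftc
  linear_combination hftc

/-- with `M = M(u)` (forward: `M' + BM = u`, `M(0)=0`) and
`Ms = M*(M(u))` (backward: `-Ms' + B Ms = M`, `Ms(T)=0`), one has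
`∫₀ᵀ (u - B² Ms) u = ∫₀ᵀ (u - BM)² + B·M(T)²`. -/
theorem stmt_12 (T B : ℝ) (hT : 0 < T) (hB : 0 < B)
    (u M M' Ms Ms' : ℝ → ℝ)
    (hu : ContinuousOn u (Set.Icc 0 T))
    (hMd : ∀ t ∈ Set.Icc (0:ℝ) T, HasDerivWithinAt M (M' t) (Set.Icc 0 T) t)
    (hMc : ContinuousOn M' (Set.Icc 0 T))
    (hMeq : ∀ t ∈ Set.Icc (0:ℝ) T, M' t + B * M t = u t)
    (hM0 : M 0 = 0)
    (hMsd : ∀ t ∈ Set.Icc (0:ℝ) T, HasDerivWithinAt Ms (Ms' t) (Set.Icc 0 T) t)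
    (hMsc : ContinuousOn Ms' (Set.Icc 0 T))
    (hMseq : ∀ t ∈ Set.Icc (0:ℝ) T, -Ms' t + B * Ms t = M t)
    (hMsT : Ms T = 0) :
    ∫ t in (0:ℝ)..T, (u t - B ^ 2 * Ms t) * u t
      = (∫ t in (0:ℝ)..T, (u t - B * M t) ^ 2) + B * M T ^ 2 :=
  stmt_12_general T B hT u M M' Ms Ms' hu hMd hMeq hM0 hMsd hMseq hMsT
end

section
/- Let B, N > 0 and u ∈ C([0,T]). With G* and H the solution operators as defined, one has the energy identity ∫₀ᵀ (u - B(B+N⁻¹) G*(H(u))) u dt = ∫₀ᵀ (u - B·H(u))² dt + N⁻¹B ∫₀ᵀ ((G*(H(u)))')² dt + B·(H(u)(T))². In particular the left-hand side is nonnegative. -/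
/-!
Along a solution, the flux `-B·A'·H(u)` has derivative
`(u - B(B+N⁻¹)A)·u - (u - B·H(u))² - N⁻¹B·(A')²`, using `A' = (B+N⁻¹)A - H(u)` twice. Integrating
over `[0,T]`, the boundary term vanishes at `0` because `H(u)(0) = 0`, and equals `B·H(u)(T)²` at `T`
because `A(T) = 0` forces `A'(T) = -H(u)(T)`.
-/

open Set

theorem intervalIntegral.integral_eq_sub_of_hasDerivWithinAt_Icc {f f' : ℝ → ℝ} {a b : ℝ}
    (hab : a ≤ b) (hf : ∀ t ∈ Icc a b, HasDerivWithinAt f (f' t) (Icc a b) t)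
    (hf' : ContinuousOn f' (Icc a b)) :
    ∫ t in a..b, f' t = f b - f a := by
  refine integral_eq_sub_of_hasDeriv_right_of_le hab
    (fun t ht => (hf t ht).continuousWithinAt) (fun t ht => ?_)
    (hf'.intervalIntegrable_of_Icc hab)
  exact (hf t (Ioo_subset_Icc_self ht)).mono_of_mem_nhdsWithin
    (Icc_mem_nhdsGT_of_mem ⟨ht.1.le, ht.2⟩)

section EnergyFlux

variable {B N : ℝ} {s : Set ℝ} {u H H' A A' : ℝ → ℝ} {t : ℝ}

theorem energy_density_eq {u h h' a a' : ℝ} (ha : -a' + (B + N⁻¹) * a = h)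
    (hu : h' + (B + N⁻¹) * h - N⁻¹ * (B + N⁻¹) * a = u) :
    (u - B * (B + N⁻¹) * a) * u - (u - B * h) ^ 2 - N⁻¹ * B * a' ^ 2
      = -(B * (((B + N⁻¹) * a' - h') * h + a' * h')) := by
  linear_combination (-(B * (h' + B * h - N⁻¹ * a' + 2 * N⁻¹ * h - N⁻¹ * (B + N⁻¹) * a))) * ha
    + B * ((B + N⁻¹) * a - 2 * h) * hu

theorem hasDerivWithinAt_energy_flux (ht : t ∈ s)
    (hH : HasDerivWithinAt H (H' t) s t) (hA : HasDerivWithinAt A (A' t) s t)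
    (hAeq : ∀ r ∈ s, -A' r + (B + N⁻¹) * A r = H r)
    (hHeq : H' t + (B + N⁻¹) * H t - N⁻¹ * (B + N⁻¹) * A t = u t) :
    HasDerivWithinAt (fun r => -(B * (A' r * H r)))
      ((u t - B * (B + N⁻¹) * A t) * u t - (u t - B * H t) ^ 2 - N⁻¹ * B * A' t ^ 2) s t := by
  have hA' : HasDerivWithinAt A' ((B + N⁻¹) * A' t - H' t) s t :=
    ((hA.const_mul _).sub hH).congr
      (fun r hr => by simp only [Pi.sub_apply]; linarith [hAeq r hr])
      (by simp only [Pi.sub_apply]; linarith [hAeq t ht])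
  rw [energy_density_eq (hAeq t ht) hHeq]
  exact ((hA'.mul hH).const_mul B).neg

variable {a b : ℝ}

theorem integral_energy_identity (hab : a ≤ b) (hu : ContinuousOn u (Icc a b))
    (hHd : ∀ t ∈ Icc a b, HasDerivWithinAt H (H' t) (Icc a b) t)
    (hAd : ∀ t ∈ Icc a b, HasDerivWithinAt A (A' t) (Icc a b) t)
    (hAeq : ∀ t ∈ Icc a b, -A' t + (B + N⁻¹) * A t = H t) (hAb : A b = 0)
    (hHeq : ∀ t ∈ Icc a b, H' t + (B + N⁻¹) * H t - N⁻¹ * (B + N⁻¹) * A t = u t)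
    (hHa : H a = 0) :
    (∫ t in a..b, (u t - B * (B + N⁻¹) * A t) * u t)
      = (∫ t in a..b, (u t - B * H t) ^ 2) + N⁻¹ * B * (∫ t in a..b, A' t ^ 2) + B * H b ^ 2 := by
  have hHc : ContinuousOn H (Icc a b) := fun t ht => (hHd t ht).continuousWithinAt
  have hAc : ContinuousOn A (Icc a b) := fun t ht => (hAd t ht).continuousWithinAt
  have hA'c : ContinuousOn A' (Icc a b) :=
    (((continuousOn_const (c := B + N⁻¹)).mul hAc).sub hHc).congr fun t ht => by
      simp only [Pi.sub_apply, Pi.mul_apply]; linarith [hAeq t ht]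
  have hA'b : A' b = -H b := by
    have h := hAeq b (right_mem_Icc.2 hab)
    rw [hAb, mul_zero] at h
    linarith
  have hlhs : ContinuousOn (fun t => (u t - B * (B + N⁻¹) * A t) * u t) (Icc a b) :=
    (hu.sub (continuousOn_const.mul hAc)).mul hu
  have hsq : ContinuousOn (fun t => (u t - B * H t) ^ 2) (Icc a b) :=
    (hu.sub (continuousOn_const.mul hHc)).pow 2
  have hA'sq : ContinuousOn (fun t => N⁻¹ * B * A' t ^ 2) (Icc a b) :=
    continuousOn_const.mul (hA'c.pow 2)
  have hint {f : ℝ → ℝ} (hf : ContinuousOn f (Icc a b)) :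
      IntervalIntegrable f MeasureTheory.volume a b :=
    hf.intervalIntegrable_of_Icc hab
  have hflux := intervalIntegral.integral_eq_sub_of_hasDerivWithinAt_Icc hab
    (fun t ht => hasDerivWithinAt_energy_flux ht (hHd t ht) (hAd t ht) hAeq (hHeq t ht))
    ((hlhs.sub hsq).sub hA'sq)
  rw [intervalIntegral.integral_sub ((hint hlhs).sub (hint hsq)) (hint hA'sq),
    intervalIntegral.integral_sub (hint hlhs) (hint hsq),
    intervalIntegral.integral_const_mul, hA'b, hHa] at hflux
  linear_combination hflux

end EnergyFlux

theorem stmt_15_general (T B N : ℝ) (hT : 0 < T) (hB : 0 < B) (hN : 0 < N)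
    (u Hu Hu' A A' : ℝ → ℝ)
    (hu : ContinuousOn u (Set.Icc 0 T))
    (hHd : ∀ t ∈ Set.Icc (0:ℝ) T, HasDerivWithinAt Hu (Hu' t) (Set.Icc 0 T) t)
    (hAd : ∀ t ∈ Set.Icc (0:ℝ) T, HasDerivWithinAt A (A' t) (Set.Icc 0 T) t)
    (hAeq : ∀ t ∈ Set.Icc (0:ℝ) T, -A' t + (B + N⁻¹) * A t = Hu t)
    (hAT : A T = 0)
    (hHeq : ∀ t ∈ Set.Icc (0:ℝ) T,
      Hu' t + (B + N⁻¹) * Hu t - N⁻¹ * (B + N⁻¹) * A t = u t)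
    (hH0 : Hu 0 = 0) :
    (∫ t in (0:ℝ)..T, (u t - B * (B + N⁻¹) * A t) * u t)
      = (∫ t in (0:ℝ)..T, (u t - B * Hu t) ^ 2)
        + N⁻¹ * B * (∫ t in (0:ℝ)..T, (A' t) ^ 2)
        + B * (Hu T) ^ 2
    ∧ 0 ≤ ∫ t in (0:ℝ)..T, (u t - B * (B + N⁻¹) * A t) * u t := by
  have henergy := integral_energy_identity hT.le hu hHd hAd hAeq hAT hHeq hH0
  refine ⟨henergy, henergy ▸ ?_⟩
  have hsq_nonneg : 0 ≤ ∫ t in (0:ℝ)..T, (u t - B * Hu t) ^ 2 :=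
    intervalIntegral.integral_nonneg hT.le fun t _ => sq_nonneg _
  have hA'sq_nonneg : 0 ≤ ∫ t in (0:ℝ)..T, A' t ^ 2 :=
    intervalIntegral.integral_nonneg hT.le fun t _ => sq_nonneg _
  positivity

/-- with `Hu = H(u)` and `A = G*(H(u))`, the energy identity
`∫₀ᵀ (u - B(B+N⁻¹)A) u = ∫₀ᵀ (u - B·Hu)² + N⁻¹B ∫₀ᵀ (A')² + B·Hu(T)²`
holds; in particular the left-hand side is nonnegative. -/
theorem stmt_15 (T B N : ℝ) (hT : 0 < T) (hB : 0 < B) (hN : 0 < N)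
    (u Hu Hu' A A' : ℝ → ℝ)
    (hu : ContinuousOn u (Set.Icc 0 T))
    (hHd : ∀ t ∈ Set.Icc (0:ℝ) T, HasDerivWithinAt Hu (Hu' t) (Set.Icc 0 T) t)
    (hHc : ContinuousOn Hu' (Set.Icc 0 T))
    (hAd : ∀ t ∈ Set.Icc (0:ℝ) T, HasDerivWithinAt A (A' t) (Set.Icc 0 T) t)
    (hAc : ContinuousOn A' (Set.Icc 0 T))
    (hAeq : ∀ t ∈ Set.Icc (0:ℝ) T, -A' t + (B + N⁻¹) * A t = Hu t)
    (hAT : A T = 0)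
    (hHeq : ∀ t ∈ Set.Icc (0:ℝ) T,
      Hu' t + (B + N⁻¹) * Hu t - N⁻¹ * (B + N⁻¹) * A t = u t)
    (hH0 : Hu 0 = 0) :
    (∫ t in (0:ℝ)..T, (u t - B * (B + N⁻¹) * A t) * u t)
      = (∫ t in (0:ℝ)..T, (u t - B * Hu t) ^ 2)
        + N⁻¹ * B * (∫ t in (0:ℝ)..T, (A' t) ^ 2)
        + B * (Hu T) ^ 2
    ∧ 0 ≤ ∫ t in (0:ℝ)..T, (u t - B * (B + N⁻¹) * A t) * u t :=
  stmt_15_general T B N hT hB hN u Hu Hu' A A' hu hHd hAd hAeq hAT hHeq hH0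
end

section
/- Let B, N > 0 and p ∈ C([0,T]). Set w = H(G*(p)) with G* and H the solution operators as defined. Then ∫₀ᵀ w(t) p(t) dt = ∫₀ᵀ (w'(t))² dt + B(B+N⁻¹) ∫₀ᵀ w(t)² dt + (B+N⁻¹) w(T)². In particular ∫₀ᵀ H(G*(p)) p dt ≥ 0. -/
/-- with `Gs = G*(p)` and `w = H(G*(p))` (with auxiliary
`A = G*(w)`), one has
`∫₀ᵀ w p = ∫₀ᵀ (w')² + B(B+N⁻¹) ∫₀ᵀ w² + (B+N⁻¹) w(T)²`,
and in particular `∫₀ᵀ w p ≥ 0`. -/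
theorem stmt_16 (T B N : ℝ) (hT : 0 < T) (hB : 0 < B) (hN : 0 < N)
    (p Gs Gs' w w' A A' : ℝ → ℝ)
    (hp : ContinuousOn p (Set.Icc 0 T))
    -- Gs = G*(p)
    (hGsd : ∀ t ∈ Set.Icc (0:ℝ) T, HasDerivWithinAt Gs (Gs' t) (Set.Icc 0 T) t)
    (hGsc : ContinuousOn Gs' (Set.Icc 0 T))
    (hGseq : ∀ t ∈ Set.Icc (0:ℝ) T, -Gs' t + (B + N⁻¹) * Gs t = p t)
    (hGsT : Gs T = 0)
    -- w = H(Gs), A = G*(w)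
    (hwd : ∀ t ∈ Set.Icc (0:ℝ) T, HasDerivWithinAt w (w' t) (Set.Icc 0 T) t)
    (hwc : ContinuousOn w' (Set.Icc 0 T))
    (hAd : ∀ t ∈ Set.Icc (0:ℝ) T, HasDerivWithinAt A (A' t) (Set.Icc 0 T) t)
    (hAc : ContinuousOn A' (Set.Icc 0 T))
    (hAeq : ∀ t ∈ Set.Icc (0:ℝ) T, -A' t + (B + N⁻¹) * A t = w t)
    (hAT : A T = 0)
    (hweq : ∀ t ∈ Set.Icc (0:ℝ) T,
      w' t + (B + N⁻¹) * w t - N⁻¹ * (B + N⁻¹) * A t = Gs t)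
    (hw0 : w 0 = 0) :
    (∫ t in (0:ℝ)..T, w t * p t)
      = (∫ t in (0:ℝ)..T, (w' t) ^ 2)
        + B * (B + N⁻¹) * (∫ t in (0:ℝ)..T, (w t) ^ 2)
        + (B + N⁻¹) * (w T) ^ 2
    ∧ 0 ≤ ∫ t in (0:ℝ)..T, w t * p t := by
  have huIcc : Set.uIcc (0:ℝ) T = Set.Icc 0 T := Set.uIcc_of_le hT.le
  set w2 : ℝ → ℝ := fun t => Gs' t - (B + N⁻¹) * w' t + N⁻¹ * (B + N⁻¹) * A' t with hw2
  have hWc : ContinuousOn w (Set.Icc 0 T) := fun t ht => (hwd t ht).continuousWithinAt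
  have hGc : ContinuousOn Gs (Set.Icc 0 T) := fun t ht => (hGsd t ht).continuousWithinAt
  have hACc : ContinuousOn A (Set.Icc 0 T) := fun t ht => (hAd t ht).continuousWithinAt
  have hw2c : ContinuousOn w2 (Set.Icc 0 T) := by
    apply ContinuousOn.add
    · exact hGsc.sub (continuousOn_const.mul hwc)
    · exact continuousOn_const.mul hAc
  -- w' has derivative w2 within Icc
  have hw'd : ∀ t ∈ Set.Icc (0:ℝ) T, HasDerivWithinAt w' (w2 t) (Set.Icc 0 T) t := by
    intro t ht
    have hg : HasDerivWithinAt
        (fun s => Gs s - (B + N⁻¹) * w s + N⁻¹ * (B + N⁻¹) * A s)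
        (Gs' t - (B + N⁻¹) * w' t + N⁻¹ * (B + N⁻¹) * A' t) (Set.Icc 0 T) t := by
      exact ((hGsd t ht).sub ((hwd t ht).const_mul _)).add ((hAd t ht).const_mul _)
    refine hg.congr (fun s hs => ?_) ?_
    · have := hweq s hs; linarith
    · have := hweq t ht; linarith
  -- FTC for (w * w')
  have hftc : (∫ t in (0:ℝ)..T, (w' t * w' t + w t * w2 t)) = w T * w' T - w 0 * w' 0 := by
    apply intervalIntegral.integral_eq_sub_of_hasDeriv_right_of_le hT.le
    · exact hWc.mul hwc
    · intro x hx
      have hxm : x ∈ Set.Icc (0:ℝ) T := Set.mem_Icc_of_Ioo hx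
      have hd : HasDerivWithinAt (fun t => w t * w' t) (w' x * w' x + w x * w2 x)
          (Set.Icc 0 T) x := (hwd x hxm).mul (hw'd x hxm)
      exact (hd.hasDerivAt (Icc_mem_nhds hx.1 hx.2)).hasDerivWithinAt
    · apply ContinuousOn.intervalIntegrable
      rw [huIcc]
      exact (hwc.mul hwc).add (hWc.mul hw2c)
  -- boundary value
  have hTm : T ∈ Set.Icc (0:ℝ) T := ⟨hT.le, le_refl T⟩
  have hw'T : w' T = -(B + N⁻¹) * w T := by
    have := hweq T hTm; rw [hAT, hGsT] at this; linarith
  -- pointwise identity for the integrand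
  have hpt : ∀ t ∈ Set.Icc (0:ℝ) T,
      w t * p t = (w' t) ^ 2 + B * (B + N⁻¹) * (w t) ^ 2
        - (w' t * w' t + w t * w2 t) := by
    intro t ht
    have h1 := hGseq t ht
    have h2 := hAeq t ht
    have h3 := hweq t ht
    simp only [hw2]
    linear_combination (w t) * ((-1) * h1 - (B + N⁻¹) * h3 - N⁻¹ * (B + N⁻¹) * h2)
  -- integrability
  have int1 : IntervalIntegrable (fun t => (w' t) ^ 2) MeasureTheory.volume 0 T := by
    apply ContinuousOn.intervalIntegrable; rw [huIcc]; exact hwc.pow 2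
  have int2 : IntervalIntegrable (fun t => (w t) ^ 2) MeasureTheory.volume 0 T := by
    apply ContinuousOn.intervalIntegrable; rw [huIcc]; exact hWc.pow 2
  have int3 : IntervalIntegrable (fun t => w' t * w' t + w t * w2 t)
      MeasureTheory.volume 0 T := by
    apply ContinuousOn.intervalIntegrable; rw [huIcc]
    exact (hwc.mul hwc).add (hWc.mul hw2c)
  have hcongr : (∫ t in (0:ℝ)..T, w t * p t)
      = ∫ t in (0:ℝ)..T, ((w' t) ^ 2 + B * (B + N⁻¹) * (w t) ^ 2
          - (w' t * w' t + w t * w2 t)) := by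
    apply intervalIntegral.integral_congr
    intro t ht
    rw [huIcc] at ht
    exact hpt t ht
  have hsplit : (∫ t in (0:ℝ)..T, ((w' t) ^ 2 + B * (B + N⁻¹) * (w t) ^ 2
          - (w' t * w' t + w t * w2 t)))
      = (∫ t in (0:ℝ)..T, (w' t) ^ 2)
        + B * (B + N⁻¹) * (∫ t in (0:ℝ)..T, (w t) ^ 2)
        - (∫ t in (0:ℝ)..T, (w' t * w' t + w t * w2 t)) := by
    rw [intervalIntegral.integral_sub (int1.add (int2.const_mul _)) int3,
      intervalIntegral.integral_add int1 (int2.const_mul _),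
      intervalIntegral.integral_const_mul]
  have hmain : (∫ t in (0:ℝ)..T, w t * p t)
      = (∫ t in (0:ℝ)..T, (w' t) ^ 2)
        + B * (B + N⁻¹) * (∫ t in (0:ℝ)..T, (w t) ^ 2)
        + (B + N⁻¹) * (w T) ^ 2 := by
    rw [hcongr, hsplit, hftc, hw0, hw'T]; ring
  refine ⟨hmain, ?_⟩
  rw [hmain]
  have h1 : 0 ≤ ∫ t in (0:ℝ)..T, (w' t) ^ 2 :=
    intervalIntegral.integral_nonneg hT.le (fun t _ => sq_nonneg _)
  have h2 : 0 ≤ ∫ t in (0:ℝ)..T, (w t) ^ 2 :=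
    intervalIntegral.integral_nonneg hT.le (fun t _ => sq_nonneg _)
  have hβ : 0 < B + N⁻¹ := by positivity
  have h3 : 0 ≤ B * (B + N⁻¹) * ∫ t in (0:ℝ)..T, (w t) ^ 2 :=
    mul_nonneg (mul_nonneg hB.le hβ.le) h2
  have h4 : 0 ≤ (B + N⁻¹) * (w T) ^ 2 := mul_nonneg hβ.le (sq_nonneg _)
  linarith
end

section
/- Let B, N > 0 and p ∈ C([0,T]). The boundary value problem v''(t) - B(B+N⁻¹)v(t) = N⁻¹ p(t) on [0,T], with v(0) = 0 and v'(T) + (B+N⁻¹)v(T) = 0, has a unique C² solution, and this solution is v = -N⁻¹ H(G*(p)), where G* and H are the solution operators as defined. -/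
open Set Real

/-! With `k = B + N⁻¹`, the equations defining `G*` and `H` combine to
`H(G*p)'' = k B H(G*p) - p` with `H(G*p)(0) = 0` and `H(G*p)'(T) + k H(G*p)(T) = 0`, so
`-N⁻¹ H(G*p)` solves the boundary value problem. For uniqueness, the difference `u` of two
solutions satisfies `u'' = μ² u` with `μ² = B k > 0`, `u(0) = 0` and `u'(T) + k u(T) = 0`.
The quantities `(u' ± μ u) e^{∓μt}` are constant, which forces `μ u = u'(0) sinh (μt)` and
`u' = u'(0) cosh (μt)`; the Robin condition at `T` then reads
`u'(0) (μ cosh (μT) + k sinh (μT)) = 0`, so `u'(0) = 0` and `u ≡ 0`. -/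

theorem eq_of_hasDerivWithinAt_Icc_zero {E : Type*} [NormedAddCommGroup E] [NormedSpace ℝ E]
    {f : ℝ → E} {a b : ℝ} (hf : ∀ x ∈ Icc a b, HasDerivWithinAt f 0 (Icc a b) x) :
    ∀ x ∈ Icc a b, f x = f a :=
  constant_of_has_deriv_right_zero (fun x hx => (hf x hx).continuousWithinAt) fun x hx =>
    (hf x (Ico_subset_Icc_self hx)).mono_of_mem_nhdsWithin (Icc_mem_nhdsGE_of_mem hx)

section SecondOrder

variable {u u' u'' : ℝ → ℝ} {T c : ℝ}
  (hu : ∀ t ∈ Icc 0 T, HasDerivWithinAt u (u' t) (Icc 0 T) t)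
  (hu' : ∀ t ∈ Icc 0 T, HasDerivWithinAt u' (u'' t) (Icc 0 T) t)
  (heq : ∀ t ∈ Icc 0 T, u'' t = c * u t)
include hu hu' heq

theorem add_mul_mul_exp_neg_eq {a : ℝ} (ha : a * a = c) :
    ∀ t ∈ Icc 0 T, (u' t + a * u t) * exp (-a * t) = u' 0 + a * u 0 := by
  have hderiv : ∀ t ∈ Icc 0 T,
      HasDerivWithinAt (fun s => (u' s + a * u s) * exp (-a * s)) 0 (Icc 0 T) t := by
    intro t ht
    have hexp : HasDerivAt (fun s => exp (-a * s)) (exp (-a * t) * -a) t :=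
      ((hasDerivAt_id' t).const_mul (-a)).exp.congr_deriv (by ring)
    exact (((hu' t ht).add ((hu t ht).const_mul a)).mul hexp.hasDerivWithinAt).congr_deriv
      (by simp only [Pi.add_apply, heq t ht, ← ha]; ring)
  intro t ht
  simpa using eq_of_hasDerivWithinAt_Icc_zero hderiv t ht

theorem mul_eq_sinh_and_deriv_eq_cosh (hc : 0 < c) (h0 : u 0 = 0) :
    ∀ t ∈ Icc 0 T, √c * u t = u' 0 * sinh (√c * t) ∧ u' t = u' 0 * cosh (√c * t) := by
  intro t ht
  have hμ : √c * √c = c := mul_self_sqrt hc.le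
  have hplus := add_mul_mul_exp_neg_eq hu hu' heq hμ t ht
  have hminus := add_mul_mul_exp_neg_eq hu hu' heq (a := -√c) (by rw [neg_mul_neg, hμ]) t ht
  rw [h0, mul_zero, add_zero, ← eq_mul_inv_iff_mul_eq₀ (exp_pos _).ne', ← exp_neg] at hplus hminus
  simp only [neg_mul, neg_neg] at hplus hminus
  rw [sinh_eq, cosh_eq]
  constructor
  · linear_combination (hplus - hminus) / 2
  · linear_combination (hplus + hminus) / 2

theorem eq_zero_of_robin {k : ℝ} (hc : 0 < c) (hk : 0 ≤ k) (h0 : u 0 = 0)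
    (hT : u' T + k * u T = 0) : ∀ t ∈ Icc 0 T, u t = 0 := by
  intro t ht
  have hTmem : T ∈ Icc 0 T := ⟨ht.1.trans ht.2, le_rfl⟩
  have hμ : 0 < √c := sqrt_pos.2 hc
  have hrepr := mul_eq_sinh_and_deriv_eq_cosh hu hu' heq hc h0
  obtain ⟨huT, hu'T⟩ := hrepr T hTmem
  have hfactor : 0 < √c * cosh (√c * T) + k * sinh (√c * T) :=
    add_pos_of_pos_of_nonneg (mul_pos hμ (cosh_pos _))
      (mul_nonneg hk (sinh_nonneg_iff.2 (mul_nonneg hμ.le hTmem.1)))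
  have hu'0 : u' 0 = 0 := by
    have : u' 0 * (√c * cosh (√c * T) + k * sinh (√c * T)) = 0 := by
      linear_combination √c * hT - √c * hu'T - k * huT
    exact (mul_eq_zero.1 this).resolve_right hfactor.ne'
  have hut := (hrepr t ht).1
  rw [hu'0, zero_mul] at hut
  exact (mul_eq_zero.1 hut).resolve_left hμ.ne'

end SecondOrder

theorem exists_hasDerivWithinAt_deriv_of_adjoint_system {s : Set ℝ} {k m : ℝ}
    {p g g' w w' A A' : ℝ → ℝ}
    (hg : ∀ t ∈ s, HasDerivWithinAt g (g' t) s t) (hg'c : ContinuousOn g' s)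
    (hgeq : ∀ t ∈ s, -g' t + k * g t = p t)
    (hw : ∀ t ∈ s, HasDerivWithinAt w (w' t) s t) (hw'c : ContinuousOn w' s)
    (hA : ∀ t ∈ s, HasDerivWithinAt A (A' t) s t) (hA'c : ContinuousOn A' s)
    (hAeq : ∀ t ∈ s, -A' t + k * A t = w t)
    (hweq : ∀ t ∈ s, w' t + k * w t - m * k * A t = g t) :
    ∃ w'' : ℝ → ℝ, ContinuousOn w'' s ∧ (∀ t ∈ s, HasDerivWithinAt w' (w'' t) s t) ∧
      ∀ t ∈ s, w'' t = k * (k - m) * w t - p t := by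
  refine ⟨fun t => g' t - k * w' t + m * k * A' t,
    (hg'c.sub (continuousOn_const.mul hw'c)).add (continuousOn_const.mul hA'c),
    fun t ht => ?_, fun t ht => ?_⟩
  · exact (((hg t ht).sub ((hw t ht).const_mul k)).add ((hA t ht).const_mul (m * k))).congr
      (fun x hx => by simp only [Pi.add_apply, Pi.sub_apply]; linear_combination hweq x hx)
      (by simp only [Pi.add_apply, Pi.sub_apply]; linear_combination hweq t ht)
  · linear_combination -hgeq t ht - k * hweq t ht - m * k * hAeq t ht

theorem stmt_17_general (T B N : ℝ) (hT : 0 < T) (hB : 0 < B) (hN : 0 < N)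
    (p Gs Gs' w w' A A' : ℝ → ℝ)
    -- Gs = G*(p)
    (hGsd : ∀ t ∈ Set.Icc (0:ℝ) T, HasDerivWithinAt Gs (Gs' t) (Set.Icc 0 T) t)
    (hGsc : ContinuousOn Gs' (Set.Icc 0 T))
    (hGseq : ∀ t ∈ Set.Icc (0:ℝ) T, -Gs' t + (B + N⁻¹) * Gs t = p t)
    (hGsT : Gs T = 0)
    -- w = H(Gs), A = G*(w)
    (hwd : ∀ t ∈ Set.Icc (0:ℝ) T, HasDerivWithinAt w (w' t) (Set.Icc 0 T) t)
    (hwc : ContinuousOn w' (Set.Icc 0 T))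
    (hAd : ∀ t ∈ Set.Icc (0:ℝ) T, HasDerivWithinAt A (A' t) (Set.Icc 0 T) t)
    (hAc : ContinuousOn A' (Set.Icc 0 T))
    (hAeq : ∀ t ∈ Set.Icc (0:ℝ) T, -A' t + (B + N⁻¹) * A t = w t)
    (hAT : A T = 0)
    (hweq : ∀ t ∈ Set.Icc (0:ℝ) T,
      w' t + (B + N⁻¹) * w t - N⁻¹ * (B + N⁻¹) * A t = Gs t)
    (hw0 : w 0 = 0) :
    -- existence: v = -N⁻¹ w solves the BVP
    ((∃ v'' : ℝ → ℝ, ContinuousOn v'' (Set.Icc 0 T) ∧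
        (∀ t ∈ Set.Icc (0:ℝ) T,
          HasDerivWithinAt (fun s => -N⁻¹ * w' s) (v'' t) (Set.Icc 0 T) t) ∧
        (∀ t ∈ Set.Icc (0:ℝ) T,
          v'' t - B * (B + N⁻¹) * (-N⁻¹ * w t) = N⁻¹ * p t))
      ∧ -N⁻¹ * w 0 = 0
      ∧ -N⁻¹ * w' T + (B + N⁻¹) * (-N⁻¹ * w T) = 0)
    -- uniqueness: any C² solution of the BVP equals -N⁻¹ w
    ∧ (∀ v v' v'' : ℝ → ℝ,
        (∀ t ∈ Set.Icc (0:ℝ) T, HasDerivWithinAt v (v' t) (Set.Icc 0 T) t) →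
        (∀ t ∈ Set.Icc (0:ℝ) T, HasDerivWithinAt v' (v'' t) (Set.Icc 0 T) t) →
        ContinuousOn v'' (Set.Icc 0 T) →
        (∀ t ∈ Set.Icc (0:ℝ) T, v'' t - B * (B + N⁻¹) * v t = N⁻¹ * p t) →
        v 0 = 0 → v' T + (B + N⁻¹) * v T = 0 →
        ∀ t ∈ Set.Icc (0:ℝ) T, v t = -N⁻¹ * w t) := by
  obtain ⟨w'', hw''c, hw'd, hw''eq⟩ := exists_hasDerivWithinAt_deriv_of_adjoint_system
    hGsd hGsc hGseq hwd hwc hAd hAc hAeq hweq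
  have hwT : w' T + (B + N⁻¹) * w T = 0 := by
    linear_combination hweq T ⟨hT.le, le_rfl⟩ + N⁻¹ * (B + N⁻¹) * hAT + hGsT
  refine ⟨⟨⟨fun t => -N⁻¹ * w'' t, continuousOn_const.mul hw''c,
    fun t ht => (hw'd t ht).const_mul _, fun t ht => ?_⟩, by rw [hw0, mul_zero],
    by linear_combination -N⁻¹ * hwT⟩, ?_⟩
  · linear_combination -N⁻¹ * hw''eq t ht
  intro v v' v'' hvd hv'd _ hveq hv0 hvT t ht
  have hdiff := eq_zero_of_robin (u := fun s => v s + N⁻¹ * w s)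
    (fun s hs => (hvd s hs).add ((hwd s hs).const_mul _))
    (fun s hs => (hv'd s hs).add ((hw'd s hs).const_mul _))
    (fun s hs => by linear_combination hveq s hs + N⁻¹ * hw''eq s hs)
    (by positivity : 0 < B * (B + N⁻¹)) (by positivity : 0 ≤ B + N⁻¹)
    (by rw [hv0, hw0, mul_zero, add_zero]) (by linear_combination hvT + N⁻¹ * hwT) t ht
  linear_combination hdiff

/-- the boundary value problem
`v'' - B(B+N⁻¹)v = N⁻¹ p`, `v(0)=0`, `v'(T) + (B+N⁻¹)v(T) = 0`
has a unique C² solution, namely `v = -N⁻¹ H(G*(p))`. Here `Gs = G*(p)` and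
`w = H(G*(p))` (with auxiliary `A = G*(w)`). -/
theorem stmt_17 (T B N : ℝ) (hT : 0 < T) (hB : 0 < B) (hN : 0 < N)
    (p Gs Gs' w w' A A' : ℝ → ℝ)
    (hp : ContinuousOn p (Set.Icc 0 T))
    -- Gs = G*(p)
    (hGsd : ∀ t ∈ Set.Icc (0:ℝ) T, HasDerivWithinAt Gs (Gs' t) (Set.Icc 0 T) t)
    (hGsc : ContinuousOn Gs' (Set.Icc 0 T))
    (hGseq : ∀ t ∈ Set.Icc (0:ℝ) T, -Gs' t + (B + N⁻¹) * Gs t = p t)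
    (hGsT : Gs T = 0)
    -- w = H(Gs), A = G*(w)
    (hwd : ∀ t ∈ Set.Icc (0:ℝ) T, HasDerivWithinAt w (w' t) (Set.Icc 0 T) t)
    (hwc : ContinuousOn w' (Set.Icc 0 T))
    (hAd : ∀ t ∈ Set.Icc (0:ℝ) T, HasDerivWithinAt A (A' t) (Set.Icc 0 T) t)
    (hAc : ContinuousOn A' (Set.Icc 0 T))
    (hAeq : ∀ t ∈ Set.Icc (0:ℝ) T, -A' t + (B + N⁻¹) * A t = w t)
    (hAT : A T = 0)
    (hweq : ∀ t ∈ Set.Icc (0:ℝ) T,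
      w' t + (B + N⁻¹) * w t - N⁻¹ * (B + N⁻¹) * A t = Gs t)
    (hw0 : w 0 = 0) :
    -- existence: v = -N⁻¹ w solves the BVP
    ((∃ v'' : ℝ → ℝ, ContinuousOn v'' (Set.Icc 0 T) ∧
        (∀ t ∈ Set.Icc (0:ℝ) T,
          HasDerivWithinAt (fun s => -N⁻¹ * w' s) (v'' t) (Set.Icc 0 T) t) ∧
        (∀ t ∈ Set.Icc (0:ℝ) T,
          v'' t - B * (B + N⁻¹) * (-N⁻¹ * w t) = N⁻¹ * p t))
      ∧ -N⁻¹ * w 0 = 0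
      ∧ -N⁻¹ * w' T + (B + N⁻¹) * (-N⁻¹ * w T) = 0)
    -- uniqueness: any C² solution of the BVP equals -N⁻¹ w
    ∧ (∀ v v' v'' : ℝ → ℝ,
        (∀ t ∈ Set.Icc (0:ℝ) T, HasDerivWithinAt v (v' t) (Set.Icc 0 T) t) →
        (∀ t ∈ Set.Icc (0:ℝ) T, HasDerivWithinAt v' (v'' t) (Set.Icc 0 T) t) →
        ContinuousOn v'' (Set.Icc 0 T) →
        (∀ t ∈ Set.Icc (0:ℝ) T, v'' t - B * (B + N⁻¹) * v t = N⁻¹ * p t) →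
        v 0 = 0 → v' T + (B + N⁻¹) * v T = 0 →
        ∀ t ∈ Set.Icc (0:ℝ) T, v t = -N⁻¹ * w t) :=
  stmt_17_general T B N hT hB hN p Gs Gs' w w' A A' hGsd hGsc hGseq hGsT hwd hwc hAd hAc hAeq hAT
    hweq hw0
end
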